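/- Fix δ ∈ [1, 2]. Let (n_k) and (N_k) be sequences of positive integers with n_k → ∞, n_k + 1 ≤ N_k ≤ 2 n_k, and N_k / n_k → δ. Then (τ₂(n_k, N_k) − √2·N_k²) / N_k converges to −2·( 1 − δ − (1 − 3δ/2)/√2 ), where τ₂(n, N) = N·(2N(N−n−1) + (N−2)√(2nN(n−1)(N−2))) / (Nn + N − 4n). -/

import Mathlib

/-!
Put `t = 1/n` and `r = N/n`. Then `√(2nN(n−1)(N−2)) = n² s` with `s = √(2r(1−t)(r−2t))`, and
`(τ₂(n, N) − √2 N²)/N = (2r(r−1−t) + (A − B)/t) / E` where `A = (r−2t)s`, `B = √2 r E` and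
`E = r + rt − 4t`. The leading terms of `A` and `B` cancel, and `A² − B²` is divisible by `t`, so
the rationalised form `(A − B)/t = (A² − B²)/(t(A + B))` is continuous at `(t, r) = (0, δ)`,
where `A + B = 2√2 δ² ≠ 0`; its value there is the limit.
-/

open Filter

/-- The degree-2 universal upper bound
`τ₂(n, N) = N·(2N(N−n−1) + (N−2)·√(2nN(n−1)(N−2))) / (Nn + N − 4n)`. -/
noncomputable def tau2 (n N : ℕ) : ℝ :=
  (N : ℝ) * (2 * N * ((N : ℝ) - n - 1)
      + ((N : ℝ) - 2) * Real.sqrt (2 * n * N * ((n : ℝ) - 1) * ((N : ℝ) - 2)))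
    / ((N : ℝ) * n + N - 4 * n)

noncomputable section

namespace Tau2

def root (t r : ℝ) : ℝ := √(2 * r * (1 - t) * (r - 2 * t))

def denom (t r : ℝ) : ℝ := r + r * t - 4 * t

/-- `(A² − B²)/(2rt)`. -/
def numer (t r : ℝ) : ℝ :=
  2 * r ^ 2 - 3 * r ^ 3 + t * (-4 * r + 14 * r ^ 2 - r ^ 3) + t ^ 2 * (-8 - 12 * r) + 8 * t ^ 3

/-- `(τ₂(n, N) − √2 N²)/N` at `t = 1/n`, `r = N/n`. -/
def gap (t r : ℝ) : ℝ :=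
  (2 * r * (r - 1 - t)
      + 2 * r * numer t r / ((r - 2 * t) * root t r + √2 * r * denom t r)) / denom t r

variable {t r : ℝ}

lemma sq_sub_sq_eq_numer (h : 0 ≤ 2 * r * (1 - t) * (r - 2 * t)) :
    ((r - 2 * t) * root t r) ^ 2 - (√2 * r * denom t r) ^ 2 = 2 * r * t * numer t r := by
  rw [mul_pow, mul_pow, mul_pow, root, Real.sq_sqrt h, Real.sq_sqrt zero_le_two, denom, numer]
  ring

lemma denom_pos (ht : 0 ≤ t) (ht1 : t < 1) (hr : 1 + t ≤ r) : 0 < denom t r := by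
  unfold denom
  nlinarith [mul_le_mul_of_nonneg_right hr (by linarith : 0 ≤ 1 + t)]

lemma root_add_pos (ht : 0 ≤ t) (ht1 : t < 1) (hr : 1 + t ≤ r) :
    0 < (r - 2 * t) * root t r + √2 * r * denom t r := by
  have hA : 0 ≤ (r - 2 * t) * root t r := mul_nonneg (by linarith) (Real.sqrt_nonneg _)
  have hB : 0 < √2 * r * denom t r :=
    mul_pos (mul_pos (by positivity) (by linarith)) (denom_pos ht ht1 hr)
  linarith

lemma sub_div_eq_numer_div (ht : 0 < t) (ht1 : t < 1) (hr : 1 + t ≤ r) :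
    ((r - 2 * t) * root t r - √2 * r * denom t r) / t
      = 2 * r * numer t r / ((r - 2 * t) * root t r + √2 * r * denom t r) := by
  have hsum := root_add_pos ht.le ht1 hr
  rw [div_eq_div_iff ht.ne' hsum.ne']
  have hrad : 0 ≤ 2 * r * (1 - t) * (r - 2 * t) :=
    mul_nonneg (mul_nonneg (by linarith) (by linarith)) (by linarith)
  linear_combination sq_sub_sq_eq_numer hrad

lemma tau2_sub_div_eq_gap {n N : ℕ} (hn : 2 ≤ n) (hN : n + 1 ≤ N) :
    (tau2 n N - √2 * (N : ℝ) ^ 2) / N = gap (n : ℝ)⁻¹ (N / n) := by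
  have hm : (2 : ℝ) ≤ n := by exact_mod_cast hn
  have hM : (n : ℝ) + 1 ≤ N := by exact_mod_cast hN
  have ht : (n : ℝ)⁻¹ < 1 := inv_lt_one_of_one_lt₀ (by linarith)
  have hr : 1 + (n : ℝ)⁻¹ ≤ N / n := by
    rw [le_div_iff₀ (by positivity)]; field_simp; linarith
  have hroot : √(2 * n * N * ((n : ℝ) - 1) * ((N : ℝ) - 2)) = n ^ 2 * root (n : ℝ)⁻¹ (N / n) := by
    rw [root, ← Real.sqrt_sq (by positivity : (0 : ℝ) ≤ n ^ 2), ← Real.sqrt_mul (by positivity)]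
    congr 1; field_simp
  have hE := (denom_pos (by positivity) ht hr).ne'
  have hD : (N : ℝ) * (n + 1) - n * 4 ≠ 0 := by nlinarith
  have hN0 : (N : ℝ) ≠ 0 := by linarith
  rw [gap, ← sub_div_eq_numer_div (by positivity) ht hr, tau2, hroot]
  rw [denom] at hE ⊢
  field_simp
  ring

lemma gap_zero {δ : ℝ} (hδ : 0 < δ) : gap 0 δ = -2 * (1 - δ - (1 - 3 * δ / 2) / √2) := by
  have hroot : root 0 δ = √2 * δ := by
    rw [root, show 2 * δ * (1 - 0) * (δ - 2 * 0) = 2 * δ ^ 2 by ring,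
      Real.sqrt_mul zero_le_two, Real.sqrt_sq hδ.le]
  have hδ0 := hδ.ne'
  rw [gap, hroot, numer, denom]
  norm_num
  field_simp
  ring

lemma continuousAt_gap {δ : ℝ} (hδ : 1 ≤ δ) :
    ContinuousAt (fun p : ℝ × ℝ => gap p.1 p.2) (0, δ) := by
  have hE : denom 0 δ ≠ 0 := (denom_pos le_rfl zero_lt_one (by simpa using hδ)).ne'
  have hsum : (δ - 2 * 0) * root 0 δ + √2 * δ * denom 0 δ ≠ 0 :=
    (root_add_pos le_rfl zero_lt_one (by simpa using hδ)).ne'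
  unfold gap root denom numer at *
  fun_prop (disch := assumption)

end Tau2

end

open Tau2 in
theorem tau2_asymptotics_general (δ : ℝ) (hδ1 : 1 ≤ δ)
    (n N : ℕ → ℕ)
    (hn_top : Tendsto (fun k => (n k : ℝ)) atTop atTop)
    (hNn1 : ∀ k, n k + 1 ≤ N k)
    (hratio : Tendsto (fun k => (N k : ℝ) / (n k : ℝ)) atTop (nhds δ)) :
    Tendsto (fun k => (tau2 (n k) (N k) - Real.sqrt 2 * (N k : ℝ) ^ 2) / (N k : ℝ))
      atTop (nhds (-2 * (1 - δ - (1 - 3 * δ / 2) / Real.sqrt 2))) := by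
  have hδ : 0 < δ := by linarith
  rw [← gap_zero hδ]
  refine ((continuousAt_gap hδ1).tendsto.comp
    (hn_top.inv_tendsto_atTop.prodMk_nhds hratio)).congr' ?_
  filter_upwards [hn_top.eventually_ge_atTop 2] with k hk
  exact (tau2_sub_div_eq_gap (by exact_mod_cast hk) (hNn1 k)).symm

/-- Asymptotics of the degree-2 bound in the regime `N_k ∼ δ n_k`, `1 ≤ δ ≤ 2`:
`(τ₂(n_k, N_k) − √2·N_k²)/N_k → −2(1 − δ − (1 − 3δ/2)/√2)`. -/
theorem tau2_asymptotics (δ : ℝ) (hδ1 : 1 ≤ δ) (hδ2 : δ ≤ 2)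
    (n N : ℕ → ℕ) (hn : ∀ k, 0 < n k) (hN : ∀ k, 0 < N k)
    (hn_top : Tendsto (fun k => (n k : ℝ)) atTop atTop)
    (hNn1 : ∀ k, n k + 1 ≤ N k) (hNn2 : ∀ k, N k ≤ 2 * n k)
    (hratio : Tendsto (fun k => (N k : ℝ) / (n k : ℝ)) atTop (nhds δ)) :
    Tendsto (fun k => (tau2 (n k) (N k) - Real.sqrt 2 * (N k : ℝ) ^ 2) / (N k : ℝ))
      atTop (nhds (-2 * (1 - δ - (1 - 3 * δ / 2) / Real.sqrt 2))) :=
  tau2_asymptotics_general δ hδ1 n N hn_top hNn1 hratio
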